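/- Fix real x, y with 0 < x < 1, 0 < y < 1 and x ≠ y, and define, for real ε in a neighbourhood of 0, H(ε) = Σ_{m≥0} Σ_{n≥0} ( (m+n)! / (2+ε)_{m+n} ) x^m y^n. Then, as ε → 0, H(ε) − [ (log(1−y) − log(1−x))/(x−y) + ε·(1/(x−y))·( log(1−y) − log(1−x) + (1/2)·log(1−y)² − (1/2)·log(1−x)² − Li_2(x) + Li_2(y) ) ] = O(ε²). -/

import Mathlib

/-!
Write `k! / (2+ε)_k = 1 / ((k+1) ∏_{j<k} (1 + ε/(j+2)))`. Expanding the product to first order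
gives `k! / (2+ε)_k = (1 - ε (H_{k+1} - 1)) / (k+1) + O(ε² k³)` uniformly in `k` for `|ε| ≤ 1`,
and this error is summable against `x^m y^n`. Summing along the antidiagonals `m + n = k` turns
`x^m y^n` into `(x^{k+1} - y^{k+1}) / (x - y)`, so both remaining double series reduce to the
one-variable series `∑ x^{k+1}/(k+1) = -log(1-x)` and
`∑ (H_{k+1} - 1) x^{k+1}/(k+1) = ½ log(1-x)² + Li₂(x) + log(1-x)`; the latter comes from the
Cauchy square of the logarithm series.
-/

open Asymptotics

/-- The polylogarithm `Li_s(z) = Σ_{k ≥ 1} z^k / k^s`. -/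
noncomputable def Li (s : ℕ) (z : ℝ) : ℝ := ∑' k : ℕ, z ^ (k + 1) / ((k : ℝ) + 1) ^ s

open Finset
open scoped Nat

section ProdOneAdd

variable {ι R : Type*} [NormedCommRing R] [NormOneClass R] (f : ι → R) (s : Finset ι)

theorem norm_prod_one_add_le : ‖∏ i ∈ s, (1 + f i)‖ ≤ ∏ i ∈ s, (1 + ‖f i‖) :=
  (Finset.norm_prod_le _ _).trans <| prod_le_prod (fun _ _ => norm_nonneg _) fun _ _ =>
    (norm_add_le _ _).trans_eq (by rw [norm_one])

theorem norm_prod_one_add_sub_one_le_mul_prod :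
    ‖∏ i ∈ s, (1 + f i) - 1‖ ≤ (∑ i ∈ s, ‖f i‖) * ∏ i ∈ s, (1 + ‖f i‖) := by
  induction s using Finset.cons_induction with
  | empty => simp
  | cons a s _ ih =>
    rw [prod_cons, prod_cons, sum_cons]
    set A := ∑ i ∈ s, ‖f i‖
    set Q := ∏ i ∈ s, (1 + ‖f i‖)
    have hA : 0 ≤ A := sum_nonneg fun i _ => norm_nonneg (f i)
    have hQ : 0 ≤ Q := prod_nonneg fun i _ => by positivity
    have hg := norm_nonneg (f a)
    calc ‖(1 + f a) * ∏ i ∈ s, (1 + f i) - 1‖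
        = ‖(∏ i ∈ s, (1 + f i) - 1) + f a * ∏ i ∈ s, (1 + f i)‖ := by congr 1; ring
      _ ≤ A * Q + ‖f a‖ * Q :=
        (norm_add_le _ _).trans <| add_le_add ih <| (norm_mul_le _ _).trans <|
          mul_le_mul_of_nonneg_left (norm_prod_one_add_le f s) hg
      _ ≤ (‖f a‖ + A) * ((1 + ‖f a‖) * Q) := by
        nlinarith [mul_nonneg (mul_nonneg hg (add_nonneg hg hA)) hQ]

theorem norm_prod_one_add_sub_one_sub_sum_le_sq_mul_prod :
    ‖∏ i ∈ s, (1 + f i) - 1 - ∑ i ∈ s, f i‖ ≤ (∑ i ∈ s, ‖f i‖) ^ 2 * ∏ i ∈ s, (1 + ‖f i‖) := by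
  induction s using Finset.cons_induction with
  | empty => simp
  | cons a s _ ih =>
    rw [prod_cons, prod_cons, sum_cons, sum_cons]
    set A := ∑ i ∈ s, ‖f i‖
    set Q := ∏ i ∈ s, (1 + ‖f i‖)
    have hA : 0 ≤ A := sum_nonneg fun i _ => norm_nonneg (f i)
    have hQ : 0 ≤ Q := prod_nonneg fun i _ => by positivity
    have hg := norm_nonneg (f a)
    calc ‖(1 + f a) * ∏ i ∈ s, (1 + f i) - 1 - (f a + ∑ i ∈ s, f i)‖
        = ‖(∏ i ∈ s, (1 + f i) - 1 - ∑ i ∈ s, f i) + f a * (∏ i ∈ s, (1 + f i) - 1)‖ := by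
          congr 1; ring
      _ ≤ A ^ 2 * Q + ‖f a‖ * (A * Q) :=
        (norm_add_le _ _).trans <| add_le_add ih <| (norm_mul_le _ _).trans <|
          mul_le_mul_of_nonneg_left (norm_prod_one_add_sub_one_le_mul_prod f s) hg
      _ ≤ (‖f a‖ + A) ^ 2 * ((1 + ‖f a‖) * Q) := by
        have h1 : A ^ 2 + ‖f a‖ * A ≤ (‖f a‖ + A) ^ 2 := by nlinarith
        have h2 : 0 ≤ (‖f a‖ + A) ^ 2 * ‖f a‖ * Q := by positivity
        nlinarith [mul_le_mul_of_nonneg_right h1 hQ]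

end ProdOneAdd

theorem ascPochhammer_eval_two_add (k : ℕ) (ε : ℝ) :
    (ascPochhammer ℝ k).eval (2 + ε) = (k + 1)! * ∏ j ∈ range k, (1 + ε / ((j : ℝ) + 2)) := by
  induction k with
  | zero => simp
  | succ k ih =>
    have hk : (k : ℝ) + 2 ≠ 0 := by positivity
    rw [ascPochhammer_succ_eval, ih, prod_range_succ, Nat.factorial_succ (k + 1)]
    push_cast
    field_simp
    ring

theorem prod_one_add_div_add_two_mono {t t' : ℝ} (ht : -1 ≤ t) (htt' : t ≤ t') (k : ℕ) :
    ∏ j ∈ range k, (1 + t / ((j : ℝ) + 2)) ≤ ∏ j ∈ range k, (1 + t' / ((j : ℝ) + 2)) := by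
  refine prod_le_prod (fun j _ => ?_) fun j _ => by gcongr
  have : -1 / ((j : ℝ) + 2) ≤ t / (j + 2) := by gcongr
  have : -1 / ((j : ℝ) + 2) ≥ -1 := by
    rw [ge_iff_le, le_div_iff₀ (by positivity)]; linarith [(j.cast_nonneg : (0 : ℝ) ≤ j)]
  linarith

theorem prod_one_add_neg_one_div_add_two (k : ℕ) :
    ∏ j ∈ range k, (1 + -1 / ((j : ℝ) + 2)) = 1 / (k + 1) := by
  induction k with
  | zero => simp
  | succ k ih =>
    rw [prod_range_succ, ih]
    push_cast
    field_simp
    ring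

theorem prod_one_add_one_div_add_two (k : ℕ) :
    ∏ j ∈ range k, (1 + 1 / ((j : ℝ) + 2)) = (k + 2) / 2 := by
  induction k with
  | zero => simp
  | succ k ih =>
    rw [prod_range_succ, ih]
    push_cast
    field_simp
    ring

/-- `H_{k+1} - 1 = ∑_{j<k} 1/(j+2)`, the derivative at `ε = 0` of `log (2+ε)_k`. -/
noncomputable def harmonicTail (k : ℕ) : ℝ := ∑ j ∈ range k, 1 / ((j : ℝ) + 2)

theorem harmonicTail_nonneg (k : ℕ) : 0 ≤ harmonicTail k :=
  sum_nonneg fun j _ => by positivity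

theorem harmonicTail_le (k : ℕ) : harmonicTail k ≤ k := by
  calc harmonicTail k ≤ ∑ _j ∈ range k, (1 : ℝ) :=
        sum_le_sum fun j _ => by rw [div_le_one (by positivity)]; linarith [j.cast_nonneg (α := ℝ)]
    _ = k := by simp

theorem abs_one_sub_mul_prod_one_add_div_add_two_le {ε : ℝ} (hε : |ε| ≤ 1) (k : ℕ) :
    |1 - (1 - ε * harmonicTail k) * ∏ j ∈ range k, (1 + ε / ((j : ℝ) + 2))| ≤
      ε ^ 2 * k ^ 2 * (k + 2) := by
  set s := harmonicTail k
  set P := ∏ j ∈ range k, (1 + ε / ((j : ℝ) + 2))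
  set Q := ∏ j ∈ range k, (1 + |ε| / ((j : ℝ) + 2))
  have hQ : Q ≤ ((k : ℝ) + 2) / 2 :=
    prod_one_add_one_div_add_two k ▸ prod_one_add_div_add_two_mono (by linarith [abs_nonneg ε]) hε k
  have hs₀ : 0 ≤ s := harmonicTail_nonneg k
  have hs : s ≤ k := harmonicTail_le k
  have hQ₀ : 0 ≤ Q := prod_nonneg fun j _ => by positivity
  have hnorm : ∀ j : ℕ, ‖ε / ((j : ℝ) + 2)‖ = |ε| / ((j : ℝ) + 2) := fun j => by
    rw [Real.norm_eq_abs, abs_div, abs_of_pos (by positivity : (0 : ℝ) < j + 2)]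
  have hsum : ∀ t : ℝ, ∑ j ∈ range k, t / ((j : ℝ) + 2) = t * s := fun t => by
    simp only [s, harmonicTail, mul_sum, mul_one_div]
  have hP₁ : |P - 1| ≤ |ε| * s * Q := by
    simpa only [hnorm, hsum, Real.norm_eq_abs] using
      norm_prod_one_add_sub_one_le_mul_prod (fun j : ℕ => ε / ((j : ℝ) + 2)) (range k)
  have hP₂ : |P - 1 - ε * s| ≤ (|ε| * s) ^ 2 * Q := by
    simpa only [hnorm, hsum, Real.norm_eq_abs] using
      norm_prod_one_add_sub_one_sub_sum_le_sq_mul_prod (fun j : ℕ => ε / ((j : ℝ) + 2)) (range k)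
  clear_value s P Q
  calc |1 - (1 - ε * s) * P| = |-(P - 1 - ε * s) + ε * s * (P - 1)| := by ring_nf
    _ ≤ (|ε| * s) ^ 2 * Q + |ε| * s * (|ε| * s * Q) := by
      refine (abs_add_le _ _).trans (add_le_add (by rwa [abs_neg]) ?_)
      rw [abs_mul, abs_mul, abs_of_nonneg hs₀]
      gcongr
    _ = 2 * (ε ^ 2 * s ^ 2) * Q := by rw [← sq_abs ε]; ring
    _ ≤ 2 * (ε ^ 2 * k ^ 2) * ((k + 2) / 2) := by gcongr
    _ = ε ^ 2 * k ^ 2 * (k + 2) := by ring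

theorem abs_factorial_div_ascPochhammer_sub_le {ε : ℝ} (hε : |ε| ≤ 1) (k : ℕ) :
    |(k ! : ℝ) / (ascPochhammer ℝ k).eval (2 + ε) - (1 - ε * harmonicTail k) / (k + 1)| ≤
      ε ^ 2 * ((k : ℝ) + 2) ^ 3 := by
  have hfac : ((k + 1)! : ℝ) = (k + 1) * k ! := by push_cast [Nat.factorial_succ]; ring
  have hnum := abs_one_sub_mul_prod_one_add_div_add_two_le hε k
  have hP : 1 / ((k : ℝ) + 1) ≤ ∏ j ∈ range k, (1 + ε / ((j : ℝ) + 2)) :=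
    prod_one_add_neg_one_div_add_two k ▸
      prod_one_add_div_add_two_mono le_rfl (abs_le.mp hε).1 k
  rw [ascPochhammer_eval_two_add, hfac]
  generalize harmonicTail k = s at hnum ⊢
  generalize ∏ j ∈ range k, (1 + ε / ((j : ℝ) + 2)) = P at hP hnum ⊢
  have hk := k.cast_nonneg (α := ℝ)
  have hP₀ : 0 < P := lt_of_lt_of_le (by positivity) hP
  have hden : 1 ≤ ((k : ℝ) + 1) * P := (div_le_iff₀' (by positivity)).mp hP
  calc |(k ! : ℝ) / ((k + 1) * k ! * P) - (1 - ε * s) / (k + 1)|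
      = |1 - (1 - ε * s) * P| / ((k + 1) * P) := by
        rw [← abs_of_pos (by positivity : 0 < ((k : ℝ) + 1) * P), ← abs_div]
        congr 1
        field_simp
    _ ≤ ε ^ 2 * k ^ 2 * (k + 2) := div_le_of_le_mul₀ (by positivity) (by positivity)
        (hnum.trans (le_mul_of_one_le_right (by positivity) hden))
    _ ≤ ε ^ 2 * ((k : ℝ) + 2) ^ 3 := by
      rw [mul_assoc]
      gcongr
      nlinarith

theorem summable_add_two_pow_mul_geometric (d : ℕ) {r : ℝ} (hr : |r| < 1) :
    Summable fun n : ℕ => ((n : ℝ) + 2) ^ d * r ^ n := by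
  simp_rw [add_pow, sum_mul]
  refine summable_sum fun j _ => ?_
  simpa only [mul_right_comm _ _ (r ^ _), mul_assoc] using
    (summable_pow_mul_geometric_of_norm_lt_one j hr).mul_right ((2 : ℝ) ^ (d - j) * d.choose j)

theorem HasSum.of_sum_antidiagonal {G : ℕ × ℕ → ℝ} {S : ℝ} (hG : Summable G)
    (h : HasSum (fun n => ∑ p ∈ antidiagonal n, G p) S) : HasSum G S := by
  let e := HasAntidiagonal.sigmaAntidiagonalEquivProd (A := ℕ)
  have hσ : HasSum (G ∘ e) (∑' p, G p) := e.hasSum_iff.mpr hG.hasSum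
  have hfib : HasSum (fun n => ∑ p ∈ antidiagonal n, G p) (∑' p, G p) := hσ.sigma fun n => by
    rw [← sum_coe_sort]
    exact hasSum_fintype _
  exact h.unique hfib ▸ hG.hasSum

section DiagonalFamily

variable {a b : ℕ → ℝ} {x y : ℝ}

def diagonalFamily (a : ℕ → ℝ) (x y : ℝ) (p : ℕ × ℕ) : ℝ := a (p.1 + p.2) * x ^ p.1 * y ^ p.2

theorem abs_diagonalFamily_le (h : ∀ k, |a k| ≤ b k) (p : ℕ × ℕ) :
    |diagonalFamily a x y p| ≤ diagonalFamily b |x| |y| p := by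
  simp only [diagonalFamily, abs_mul, abs_pow]
  gcongr
  exact h _

theorem summable_diagonalFamily {d : ℕ} (ha : ∀ k, |a k| ≤ ((k : ℝ) + 2) ^ d) (hx : |x| < 1)
    (hy : |y| < 1) : Summable (diagonalFamily a x y) := by
  have hprod := (summable_add_two_pow_mul_geometric d (r := |x|) (by rwa [abs_abs])).mul_of_nonneg
    (summable_add_two_pow_mul_geometric d (r := |y|) (by rwa [abs_abs]))
    (fun _ => by positivity) (fun _ => by positivity)
  refine hprod.of_norm_bounded fun p => (abs_diagonalFamily_le ha p).trans ?_
  have hsum : (((p.1 + p.2 : ℕ) : ℝ) + 2) ≤ ((p.1 : ℝ) + 2) * ((p.2 : ℝ) + 2) := by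
    push_cast; nlinarith [p.1.cast_nonneg (α := ℝ), p.2.cast_nonneg (α := ℝ)]
  calc diagonalFamily (fun k => ((k : ℝ) + 2) ^ d) |x| |y| p
      ≤ (((p.1 : ℝ) + 2) * ((p.2 : ℝ) + 2)) ^ d * |x| ^ p.1 * |y| ^ p.2 := by
        unfold diagonalFamily; dsimp only; gcongr
    _ = ((p.1 : ℝ) + 2) ^ d * |x| ^ p.1 * (((p.2 : ℝ) + 2) ^ d * |y| ^ p.2) := by
        rw [mul_pow]; ring

theorem sum_antidiagonal_diagonalFamily (hxy : x ≠ y) (n : ℕ) :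
    ∑ p ∈ antidiagonal n, diagonalFamily a x y p = a n * (x ^ (n + 1) - y ^ (n + 1)) / (x - y) := by
  have hrow : ∑ p ∈ antidiagonal n, diagonalFamily a x y p =
      a n * ∑ p ∈ antidiagonal n, x ^ p.1 * y ^ p.2 := by
    rw [mul_sum]
    refine sum_congr rfl fun p hp => ?_
    rw [diagonalFamily, mem_antidiagonal.mp hp, mul_assoc]
  rw [hrow, mul_div_assoc, ← geom_sum₂_mul, mul_div_cancel_right₀ _ (sub_ne_zero.mpr hxy),
    Nat.sum_antidiagonal_eq_sum_range_succ_mk, Nat.add_sub_cancel]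

theorem hasSum_diagonalFamily (hs : Summable (diagonalFamily a x y)) (hxy : x ≠ y) {A B : ℝ}
    (hA : HasSum (fun n => a n * x ^ (n + 1)) A) (hB : HasSum (fun n => a n * y ^ (n + 1)) B) :
    HasSum (diagonalFamily a x y) ((A - B) / (x - y)) := by
  refine HasSum.of_sum_antidiagonal hs ?_
  simp_rw [sum_antidiagonal_diagonalFamily hxy, mul_sub, sub_div]
  exact (hA.div_const _).sub (hB.div_const _)

end DiagonalFamily

theorem harmonicTail_succ (n : ℕ) : harmonicTail (n + 1) = harmonicTail n + 1 / ((n : ℝ) + 2) :=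
  sum_range_succ _ _

theorem sum_antidiagonal_one_div_mul (n : ℕ) :
    ∑ p ∈ antidiagonal n, 1 / (((p.1 : ℝ) + 1) * ((p.2 : ℝ) + 1)) =
      2 * (harmonicTail n + 1) / (n + 2) := by
  have hsplit : ∀ p ∈ antidiagonal n, 1 / (((p.1 : ℝ) + 1) * ((p.2 : ℝ) + 1)) =
      (1 / ((p.1 : ℝ) + 1) + 1 / ((p.swap.1 : ℝ) + 1)) / (n + 2) := fun p hp => by
    have hn : (n : ℝ) + 2 = ((p.1 : ℝ) + 1) + ((p.2 : ℝ) + 1) := by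
      rw [← mem_antidiagonal.mp hp]; push_cast; ring
    rw [Prod.fst_swap, hn]
    field_simp
    ring
  have hharm : ∑ p ∈ antidiagonal n, 1 / ((p.1 : ℝ) + 1) = harmonicTail n + 1 := by
    rw [Nat.sum_antidiagonal_eq_sum_range_succ_mk, Nat.succ_eq_add_one, sum_range_succ']
    simp only [harmonicTail, Nat.cast_add, Nat.cast_one, Nat.cast_zero]
    norm_num [add_assoc]
  rw [sum_congr rfl hsplit, ← sum_div, sum_add_distrib,
    Nat.sum_antidiagonal_swap (f := fun p : ℕ × ℕ => 1 / ((p.1 : ℝ) + 1)), hharm]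
  ring

section LogSeries

variable {x : ℝ} (hx : |x| < 1)
include hx

theorem hasSum_Li (s : ℕ) : HasSum (fun k : ℕ => x ^ (k + 1) / ((k : ℝ) + 1) ^ s) (Li s x) := by
  refine Summable.hasSum <| Summable.of_norm_bounded
    ((summable_geometric_of_lt_one (abs_nonneg x) hx).mul_left |x|) fun k => ?_
  rw [norm_div, norm_pow, norm_pow, Real.norm_eq_abs, Real.norm_eq_abs,
    abs_of_pos (by positivity : (0 : ℝ) < k + 1), ← pow_succ']
  exact div_le_self (by positivity) (one_le_pow₀ (by linarith [k.cast_nonneg (α := ℝ)]))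

theorem hasSum_log_one_sub_sq :
    HasSum (fun n : ℕ => (harmonicTail n + 1) * x ^ (n + 2) / (n + 2))
      (Real.log (1 - x) ^ 2 / 2) := by
  set L := fun k : ℕ => x ^ (k + 1) / ((k : ℝ) + 1)
  have hL : HasSum L (-Real.log (1 - x)) := Real.hasSum_pow_div_log_of_abs_lt_one hx
  have hLnorm : Summable fun k => ‖L k‖ := by
    refine (Real.hasSum_pow_div_log_of_abs_lt_one (x := |x|) (by rwa [abs_abs])).summable.congr
      fun k => ?_
    rw [Real.norm_eq_abs, abs_div, abs_pow, abs_of_pos (by positivity : (0 : ℝ) < k + 1)]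
  have hcauchy := tsum_mul_tsum_eq_tsum_sum_antidiagonal_of_summable_norm hLnorm hLnorm
  rw [hL.tsum_eq] at hcauchy
  have hterm : ∀ n : ℕ, ∑ p ∈ antidiagonal n, L p.1 * L p.2 =
      2 * ((harmonicTail n + 1) * x ^ (n + 2) / (n + 2)) := fun n => by
    rw [show 2 * ((harmonicTail n + 1) * x ^ (n + 2) / (n + 2)) =
      x ^ (n + 2) * (2 * (harmonicTail n + 1) / (n + 2)) by ring, ← sum_antidiagonal_one_div_mul,
      mul_sum]
    refine sum_congr rfl fun p hp => ?_
    rw [← mem_antidiagonal.mp hp]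
    simp only [L]
    field_simp
    ring
  have hsum := (summable_norm_sum_mul_antidiagonal_of_summable_norm hLnorm hLnorm).of_norm.hasSum
  rw [← hcauchy] at hsum
  simp only [hterm] at hsum
  have h2 := hsum.div_const 2
  rw [show -Real.log (1 - x) * -Real.log (1 - x) / 2 = Real.log (1 - x) ^ 2 / 2 by ring] at h2
  simpa only [mul_div_cancel_left₀ _ (two_ne_zero' ℝ)] using h2

theorem hasSum_harmonicTail_mul_pow_div :
    HasSum (fun n : ℕ => harmonicTail n * x ^ (n + 1) / (n + 1))
      (Real.log (1 - x) ^ 2 / 2 + Li 2 x + Real.log (1 - x)) := by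
  have hlog := (hasSum_nat_add_iff' 1).mpr (Real.hasSum_pow_div_log_of_abs_lt_one hx)
  have hLi := (hasSum_nat_add_iff' 1).mpr (hasSum_Li hx 2)
  have hsum := ((hasSum_log_one_sub_sq hx).sub hlog).add hLi
  -- After the shift by one, `harmonicTail_succ` splits each term into those of the three series.
  rw [← hasSum_nat_add_iff' 1]
  convert hsum using 1
  · funext n
    rw [harmonicTail_succ]
    push_cast
    field_simp
    ring
  · simp only [range_one, sum_singleton, harmonicTail, range_zero, sum_empty, Nat.cast_zero]
    ring

end LogSeries

open Filter in
theorem isBigO_tsum_sub_of_norm_sub_le {ι α E : Type*} [NormedAddCommGroup E] [CompleteSpace E]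
    {l : Filter α} {F G : α → ι → E} {S : α → E} {g : α → ℝ} {w : ι → ℝ} (hw : Summable w)
    (hG : ∀ᶠ ε in l, HasSum (G ε) (S ε)) (hFG : ∀ᶠ ε in l, ∀ i, ‖F ε i - G ε i‖ ≤ ‖g ε‖ * w i) :
    (fun ε => ∑' i, F ε i - S ε) =O[l] g := by
  refine IsBigO.of_bound (∑' i, w i) ?_
  filter_upwards [hG, hFG] with ε hGε hFGε
  have hr : HasSum (fun i => F ε i - G ε i) (∑' i, (F ε i - G ε i)) :=
    ((hw.mul_left ‖g ε‖).of_norm_bounded hFGε).hasSum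
  have hF : ∑' i, F ε i = ∑' i, (F ε i - G ε i) + S ε := by
    simpa only [sub_add_cancel] using (hr.add hGε).tsum_eq
  rw [hF, add_sub_cancel_right, mul_comm, ← tsum_mul_left]
  exact tsum_of_norm_bounded (hw.mul_left ‖g ε‖).hasSum hFGε

theorem abs_diagonalFamily_factorial_div_ascPochhammer_sub_le {ε : ℝ} (hε : |ε| ≤ 1) (x y : ℝ)
    (p : ℕ × ℕ) :
    |diagonalFamily (fun k => k ! / (ascPochhammer ℝ k).eval (2 + ε)) x y p -
        (diagonalFamily (fun k => 1 / ((k : ℝ) + 1)) x y p +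
          ε * diagonalFamily (fun k => -(harmonicTail k / (k + 1))) x y p)| ≤
      ε ^ 2 * diagonalFamily (fun k => ((k : ℝ) + 2) ^ 3) |x| |y| p := by
  have hdiff := abs_diagonalFamily_le (x := x) (y := y)
    (fun k => abs_factorial_div_ascPochhammer_sub_le hε k) p
  simp only [diagonalFamily] at hdiff ⊢
  convert hdiff using 1
  · congr 1; ring
  · ring

section DiagonalSums

variable {x y : ℝ} (hx : |x| < 1) (hy : |y| < 1) (hxy : x ≠ y)
include hx hy hxy

theorem hasSum_diagonalFamily_one_div :
    HasSum (diagonalFamily (fun k => 1 / ((k : ℝ) + 1)) x y)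
      ((Real.log (1 - y) - Real.log (1 - x)) / (x - y)) := by
  have hs := summable_diagonalFamily (d := 0) (a := fun k => 1 / ((k : ℝ) + 1))
    (fun k => by rw [pow_zero, abs_of_pos (by positivity)]; exact div_le_self zero_le_one (by simp))
    hx hy
  convert hasSum_diagonalFamily hs hxy
    (by simpa only [one_div_mul_eq_div] using Real.hasSum_pow_div_log_of_abs_lt_one hx)
    (by simpa only [one_div_mul_eq_div] using Real.hasSum_pow_div_log_of_abs_lt_one hy) using 1
  ring

theorem hasSum_diagonalFamily_neg_harmonicTail_div :
    HasSum (diagonalFamily (fun k => -(harmonicTail k / (k + 1))) x y)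
      ((Real.log (1 - y) ^ 2 / 2 + Li 2 y + Real.log (1 - y) -
        (Real.log (1 - x) ^ 2 / 2 + Li 2 x + Real.log (1 - x))) / (x - y)) := by
  have hs := summable_diagonalFamily (d := 0) (a := fun k => -(harmonicTail k / (k + 1)))
    (fun k => by
      rw [pow_zero, abs_neg, abs_of_nonneg (by have := harmonicTail_nonneg k; positivity),
        div_le_one (by positivity)]
      linarith [harmonicTail_le k]) hx hy
  convert hasSum_diagonalFamily hs hxy
    (by simpa only [neg_mul, div_mul_eq_mul_div] using (hasSum_harmonicTail_mul_pow_div hx).neg)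
    (by simpa only [neg_mul, div_mul_eq_mul_div] using (hasSum_harmonicTail_mul_pow_div hy).neg)
    using 1
  ring

end DiagonalSums

/-- The ε-expansion of the Appell value `H(ε) = F₁(1; 1, 1; 2+ε; x, y)` up to order `ε`:
`H(ε) = (log(1-y)-log(1-x))/(x-y) + ε(1/(x-y))(log(1-y)-log(1-x)
  + ½log(1-y)² - ½log(1-x)² - Li₂(x) + Li₂(y)) + O(ε²)` as `ε → 0`. -/
theorem stmt19 (x y : ℝ) (hx0 : 0 < x) (hx1 : x < 1) (hy0 : 0 < y) (hy1 : y < 1)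
    (hxy : x ≠ y) :
    (fun ε : ℝ =>
        (∑' mn : ℕ × ℕ,
          ((mn.1 + mn.2).factorial : ℝ) / (ascPochhammer ℝ (mn.1 + mn.2)).eval (2 + ε) *
            x ^ mn.1 * y ^ mn.2) -
        ((Real.log (1 - y) - Real.log (1 - x)) / (x - y) +
          ε * (1 / (x - y)) *
            (Real.log (1 - y) - Real.log (1 - x) + (1 / 2) * Real.log (1 - y) ^ 2 -
              (1 / 2) * Real.log (1 - x) ^ 2 - Li 2 x + Li 2 y)))
      =O[nhds 0] fun ε : ℝ => ε ^ 2 := by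
  have hx : |x| < 1 := abs_lt.mpr ⟨by linarith, hx1⟩
  have hy : |y| < 1 := abs_lt.mpr ⟨by linarith, hy1⟩
  have h₀ := hasSum_diagonalFamily_one_div hx hy hxy
  have h₁ := hasSum_diagonalFamily_neg_harmonicTail_div hx hy hxy
  have hw := summable_diagonalFamily (d := 3) (a := fun k => ((k : ℝ) + 2) ^ 3)
    (x := |x|) (y := |y|) (fun k => (abs_of_pos (by positivity)).le) (by rwa [abs_abs])
    (by rwa [abs_abs])
  have hε : ∀ᶠ ε : ℝ in nhds 0, |ε| ≤ 1 := by
    filter_upwards [Metric.closedBall_mem_nhds (0 : ℝ) one_pos] with ε hε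
    simpa using hε
  refine (isBigO_tsum_sub_of_norm_sub_le
    (F := fun ε => diagonalFamily (fun k => k ! / (ascPochhammer ℝ k).eval (2 + ε)) x y) hw
    (Filter.Eventually.of_forall fun ε => h₀.add (h₁.mul_left ε)) ?_).congr_left
    fun ε => by simp only [diagonalFamily]; ring
  filter_upwards [hε] with ε hε p
  rw [norm_pow, Real.norm_eq_abs, Real.norm_eq_abs, sq_abs]
  exact abs_diagonalFamily_factorial_div_ascPochhammer_sub_le hε x y p
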